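/- Let f : [0,∞)×{1,…,n} → ℝ be cadlag with nonnegative jumps and Pitman ordered: f_{i}(y) ≤ f_{i-1}(y⁻) for all i = 2,…,n and y ≥ 0, with convention f(0⁻)=0. Then for every k ≤ n and y ≥ 0, the multi-point last passage value from (0,n)^k to (y,1)^k equals f_1(y) + … + f_k(y), achieved by the disjoint k-tuple of leftmost paths following the top k lines. -/

import Mathlib

open Filter Set

/-- Left limit with the convention `f(0⁻) = 0`. -/
noncomputable def lml (f : ℝ → ℝ) (z : ℝ) : ℝ := if z ≤ 0 then 0 else Function.leftLim f z

/-- Cadlag on `[0, ∞)`: right-continuous at every `x ≥ 0`, left limits exist at every `x > 0`. -/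
def Cadlag (f : ℝ → ℝ) : Prop :=
  (∀ x : ℝ, 0 ≤ x → ContinuousWithinAt f (Set.Ici x) x) ∧
  (∀ x : ℝ, 0 < x → ∃ l : ℝ, Filter.Tendsto f (nhdsWithin x (Set.Iio x)) (nhds l))

/-- All jumps are nonnegative (with the convention `f(0⁻) = 0`). -/
def NonnegJumps (f : ℝ → ℝ) : Prop := ∀ z : ℝ, 0 ≤ z → lml f z ≤ f z

/-- `S f₁ f₂ x y = sup_{z ∈ [x,y]} (f₂ z - f₁ (z⁻))`. -/
noncomputable def S (f₁ f₂ : ℝ → ℝ) (x y : ℝ) : ℝ :=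
  sSup ((fun z => f₂ z - lml f₁ z) '' Set.Icc x y)

/-- `Sm f₁ f₂ x y = sup_{z ∈ [x,y)} (f₂ z - f₁ (z⁻))`. -/
noncomputable def Sm (f₁ f₂ : ℝ → ℝ) (x y : ℝ) : ℝ :=
  sSup ((fun z => f₂ z - lml f₁ z) '' Set.Ico x y)

/-- Jump times of an ordered, essentially disjoint `k`-tuple of paths from `(0,n)` to `(y,1)`.
Path `j` occupies line `i ∈ {1,…,n}` on the interval `[t j i, t j (i-1)]`. -/
def IsTuple (n k : ℕ) (y : ℝ) (t : Fin k → ℕ → ℝ) : Prop :=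
  (∀ j, t j n = 0) ∧ (∀ j, t j 0 = y) ∧
  (∀ j, ∀ i : ℕ, i < n → t j (i + 1) ≤ t j i) ∧
  (∀ j : Fin k, ∀ hj : j.val + 1 < k, ∀ i : ℕ, i < n →
    t j i ≤ t ⟨j.val + 1, hj⟩ (i + 1))

/-- The measure `df` of the union of the paths of a disjoint `k`-tuple: on each line the raw
sum of increments, corrected by subtracting atoms shared by consecutive touching paths. -/
noncomputable def unionLen (f : ℕ → ℝ → ℝ) (n k : ℕ) (t : Fin k → ℕ → ℝ) : ℝ :=
  ∑ i ∈ Finset.Icc 1 n,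
    ((∑ j : Fin k, (f i (t j (i - 1)) - lml (f i) (t j i)))
      - ∑ j : Fin k, (if hj : j.val + 1 < k then
          (if t j (i - 1) = t ⟨j.val + 1, hj⟩ i then
            f i (t j (i - 1)) - lml (f i) (t j (i - 1)) else 0)
        else 0))

/-!
Along one path, the increments telescope: its raw `df`-length is `f₁(y)` plus the Pitman
increments `f_{r+1}(z) - f_r(z⁻) ≤ 0` at its jump times `z`, and ordering pins path `j` to time
`y` on its first `j` lines. The leftmost tuple jumps at time `0` past that point, where the Pitman
increments vanish (`f_i(0) = 0` for `i ≥ 2`), so it maximizes every path's raw length; by the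
same token it minimizes every correction for shared atoms, which are nonnegative jumps. For the
leftmost tuple, path `j` contributes `f_{j+1}(y)` plus the jumps at `y` on lines `1, …, j`, and
these jumps are exactly the atoms it shares with path `j - 1`.
-/

open Finset

def PitmanOrdered (f : ℕ → ℝ → ℝ) (n : ℕ) : Prop :=
  ∀ i : ℕ, 2 ≤ i → i ≤ n → ∀ z : ℝ, 0 ≤ z → f i z ≤ lml (f (i - 1)) z

@[simp]
lemma lml_zero (g : ℝ → ℝ) : lml g 0 = 0 := by simp [lml]

lemma PitmanOrdered.apply_zero {f : ℕ → ℝ → ℝ} {n : ℕ}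
    (hjmp : ∀ i, 1 ≤ i → i ≤ n → NonnegJumps (f i)) (hord : PitmanOrdered f n)
    {i : ℕ} (hi : 2 ≤ i) (hin : i ≤ n) : f i 0 = 0 := by
  have hle := hord i hi hin 0 le_rfl
  have hge := hjmp i (by omega) hin 0 le_rfl
  simp only [lml_zero] at hle hge
  linarith

lemma sum_Icc_one_eq_sum_range {M : Type*} [AddCommMonoid M] (n : ℕ) (φ : ℕ → M) :
    ∑ i ∈ Icc 1 n, φ i = ∑ r ∈ range n, φ (r + 1) := by
  rw [← Finset.Ico_add_one_right_eq_Icc, sum_Ico_eq_sum_range]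
  simp [add_comm]

lemma sum_Icc_ite_le {M : Type*} [AddCommMonoid M] {m n : ℕ} (hmn : m ≤ n) (φ : ℕ → M) :
    ∑ i ∈ Icc 1 n, (if i ≤ m then φ i else 0) = ∑ i ∈ Icc 1 m, φ i := by
  rw [← sum_filter]
  congr 1
  ext i
  simp only [mem_filter, Finset.mem_Icc]
  omega

lemma sum_range_ite_succ_lt {M : Type*} [AddCommMonoid M] (g : ℕ → M) (hg : g 0 = 0) (k : ℕ) :
    ∑ j ∈ range k, (if j + 1 < k then g (j + 1) else 0) = ∑ j ∈ range k, g j := by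
  cases k with
  | zero => simp
  | succ k =>
    rw [Finset.sum_range_succ, Finset.sum_range_succ', hg, if_neg (by omega), add_zero, add_zero]
    refine Finset.sum_congr rfl fun j hj => ?_
    rw [if_pos (by simpa using hj)]

namespace IsTuple

variable {n k : ℕ} {y : ℝ} {t : Fin k → ℕ → ℝ}

lemma antitone (ht : IsTuple n k y t) (j : Fin k) {a b : ℕ} (hab : a ≤ b) (hbn : b ≤ n) :
    t j b ≤ t j a := by
  induction b, hab using Nat.le_induction with
  | base => rfl
  | succ b _ ih => exact (ht.2.2.1 j b (by omega)).trans (ih (by omega))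

lemma nonneg (ht : IsTuple n k y t) (j : Fin k) {i : ℕ} (hin : i ≤ n) : 0 ≤ t j i :=
  ht.1 j ▸ ht.antitone j hin le_rfl

lemma eq_of_le (ht : IsTuple n k y t) {i : ℕ} (hin : i ≤ n) {j : Fin k} (hij : i ≤ j) :
    t j i = y := by
  induction i generalizing j with
  | zero => exact ht.2.1 j
  | succ i ih =>
    have hpred : (j.val - 1) + 1 < k := by omega
    have hlow := ht.2.2.2 ⟨j.val - 1, by omega⟩ hpred i (by omega)
    have hj : (⟨j.val - 1 + 1, hpred⟩ : Fin k) = j := Fin.ext (by simp only; omega)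
    rw [hj, ih (by omega) (by simp only; omega)] at hlow
    have hup := ht.antitone j (Nat.zero_le (i + 1)) hin
    rw [ht.2.1 j] at hup
    exact le_antisymm hup hlow

end IsTuple

section Paths

variable {f : ℕ → ℝ → ℝ} {n : ℕ}

noncomputable def pathLen (f : ℕ → ℝ → ℝ) (n : ℕ) (s : ℕ → ℝ) : ℝ :=
  ∑ i ∈ Icc 1 n, (f i (s (i - 1)) - lml (f i) (s i))

noncomputable def touchLen (f : ℕ → ℝ → ℝ) (n : ℕ) (s s' : ℕ → ℝ) : ℝ :=
  ∑ i ∈ Icc 1 n, if s (i - 1) = s' i then f i (s (i - 1)) - lml (f i) (s (i - 1)) else 0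

-- Climbs to line `j + 1` at time `0`, follows it up to time `y`, then climbs to line `1`.
def leftmostPath (y : ℝ) (j : ℕ) : ℕ → ℝ := fun i => if j + 1 ≤ i then 0 else y

-- `f 0` is not a line: the `r = 0` summand's `lml (f 0) (s 0)` is cancelled by the next term.
lemma pathLen_eq_sum_range (s : ℕ → ℝ) :
    pathLen f n s = ∑ r ∈ range n, (f (r + 1) (s r) - lml (f r) (s r))
      + lml (f 0) (s 0) - lml (f n) (s n) := by
  have htel := Finset.sum_range_sub (fun r => lml (f r) (s r)) n
  rw [pathLen, sum_Icc_one_eq_sum_range, add_sub_assoc, ← neg_sub (lml (f n) (s n)), ← htel,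
    ← sum_neg_distrib, ← sum_add_distrib]
  simp only [Nat.add_sub_cancel]
  exact Finset.sum_congr rfl fun r _ => by ring

lemma pathLen_le_pathLen_leftmostPath (hjmp : ∀ i, 1 ≤ i → i ≤ n → NonnegJumps (f i))
    (hord : PitmanOrdered f n) {s : ℕ → ℝ} {y : ℝ} {j : ℕ} (hjn : j < n)
    (hs : ∀ r ≤ n, 0 ≤ s r) (hsy : ∀ r ≤ j, s r = y) (hsn : s n = 0) :
    pathLen f n s ≤ pathLen f n (leftmostPath y j) := by
  have hstart : leftmostPath y j 0 = s 0 := by simp [leftmostPath, hsy 0 (Nat.zero_le j)]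
  have hend : leftmostPath y j n = s n := by simp [leftmostPath, hsn, hjn]
  rw [pathLen_eq_sum_range, pathLen_eq_sum_range, hstart, hend]
  gcongr ?_ + _ - _
  refine sum_le_sum fun r hr => ?_
  rw [Finset.mem_range] at hr
  by_cases hrj : r ≤ j
  · simp [leftmostPath, hsy r hrj, show ¬ j + 1 ≤ r by omega]
  · have hle := hord (r + 1) (by omega) hr (s r) (hs r hr.le)
    rw [Nat.add_sub_cancel] at hle
    simp [leftmostPath, show j + 1 ≤ r by omega, hord.apply_zero hjmp (by omega) hr]
    linarith

lemma touchLen_leftmostPath_le (hjmp : ∀ i, 1 ≤ i → i ≤ n → NonnegJumps (f i))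
    (hord : PitmanOrdered f n) {s s' : ℕ → ℝ} {y : ℝ} {j : ℕ}
    (hs : ∀ r ≤ n, 0 ≤ s r) (hsy : ∀ r ≤ j, s r = y) (hs'y : ∀ r ≤ j + 1, s' r = y) :
    touchLen f n (leftmostPath y j) (leftmostPath y (j + 1)) ≤ touchLen f n s s' := by
  refine sum_le_sum fun i hi => ?_
  rw [Finset.mem_Icc] at hi
  by_cases hij : i ≤ j + 1
  · simp [leftmostPath, hsy (i - 1) (by omega), hs'y i hij, show ¬ j + 1 ≤ i - 1 by omega,
      show ¬ j + 1 + 1 ≤ i by omega]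
  · have hzero : f i 0 = 0 := hord.apply_zero hjmp (by omega) hi.2
    simp only [leftmostPath, if_pos (show j + 1 ≤ i - 1 by omega),
      if_pos (show j + 1 + 1 ≤ i by omega), hzero, lml_zero, sub_zero, ite_self]
    split_ifs
    · exact sub_nonneg.2 (hjmp i hi.1 hi.2 _ (hs _ (by omega)))
    · rfl

lemma pathLen_leftmostPath (hjmp : ∀ i, 1 ≤ i → i ≤ n → NonnegJumps (f i))
    (hord : PitmanOrdered f n) (y : ℝ) {j : ℕ} (hjn : j < n) :
    pathLen f n (leftmostPath y j)
      = ∑ i ∈ Icc 1 (j + 1), f i y - ∑ i ∈ Icc 1 j, lml (f i) y := by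
  rw [← sum_Icc_ite_le hjn (fun i => f i y), ← sum_Icc_ite_le hjn.le (fun i => lml (f i) y),
    ← sum_sub_distrib]
  refine Finset.sum_congr rfl fun i hi => ?_
  rw [Finset.mem_Icc] at hi
  rcases lt_trichotomy i (j + 1) with hij | rfl | hij
  · simp [leftmostPath, show i ≤ j by omega, show ¬ j + 1 ≤ i - 1 by omega,
      show ¬ j + 1 ≤ i by omega, hij.le]
  · simp [leftmostPath]
  · simp [leftmostPath, show j + 1 ≤ i - 1 by omega, hij.le, show ¬ i ≤ j + 1 by omega,
      show ¬ i ≤ j by omega, hord.apply_zero hjmp (by omega) hi.2]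

lemma touchLen_leftmostPath (hjmp : ∀ i, 1 ≤ i → i ≤ n → NonnegJumps (f i))
    (hord : PitmanOrdered f n) (y : ℝ) {j : ℕ} (hjn : j + 1 ≤ n) :
    touchLen f n (leftmostPath y j) (leftmostPath y (j + 1))
      = ∑ i ∈ Icc 1 (j + 1), f i y - ∑ i ∈ Icc 1 (j + 1), lml (f i) y := by
  rw [← sum_sub_distrib, ← sum_Icc_ite_le hjn]
  refine Finset.sum_congr rfl fun i hi => ?_
  rw [Finset.mem_Icc] at hi
  by_cases hij : i ≤ j + 1
  · simp [leftmostPath, hij, show ¬ j + 1 ≤ i - 1 by omega, show ¬ j + 1 + 1 ≤ i by omega]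
  · simp [leftmostPath, hij, show j + 1 ≤ i - 1 by omega, show j + 1 + 1 ≤ i by omega,
      hord.apply_zero hjmp (by omega) hi.2]

end Paths

lemma unionLen_eq_sub (f : ℕ → ℝ → ℝ) (n k : ℕ) (t : Fin k → ℕ → ℝ) :
    unionLen f n k t = ∑ j, pathLen f n (t j)
      - ∑ j : Fin k, if hj : j.val + 1 < k then touchLen f n (t j) (t ⟨j.val + 1, hj⟩) else 0 := by
  rw [unionLen, sum_sub_distrib, sum_comm, sum_comm (s := Icc 1 n)]
  congr 1
  refine Finset.sum_congr rfl fun j _ => ?_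
  split_ifs <;> simp [touchLen]

section Tuples

variable {f : ℕ → ℝ → ℝ} {n k : ℕ} {y : ℝ}

lemma isTuple_leftmostPath (hkn : k ≤ n) (hy : 0 ≤ y) :
    IsTuple n k y (fun j => leftmostPath y j) := by
  refine ⟨fun j => if_pos (by omega), fun j => if_neg (by omega), fun j i _ => ?_,
    fun j _ i _ => ?_⟩ <;> simp only [leftmostPath] <;> split_ifs <;> first | rfl | exact hy | omega

lemma unionLen_leftmostPath (hjmp : ∀ i, 1 ≤ i → i ≤ n → NonnegJumps (f i))
    (hord : PitmanOrdered f n) (hkn : k ≤ n) (y : ℝ) :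
    unionLen f n k (fun j => leftmostPath y j) = ∑ i ∈ Icc 1 k, f i y := by
  set F : ℕ → ℝ := fun m => ∑ i ∈ Icc 1 m, f i y
  set L : ℕ → ℝ := fun m => ∑ i ∈ Icc 1 m, lml (f i) y
  have hpath (j : Fin k) : pathLen f n (leftmostPath y j) = F (j + 1) - L j :=
    pathLen_leftmostPath hjmp hord y (by omega)
  have htouch (j : Fin k) :
      (if hj : j.val + 1 < k then touchLen f n (leftmostPath y j) (leftmostPath y (j + 1)) else 0)
        = if j.val + 1 < k then F (j + 1) - L (j + 1) else 0 := by
    split_ifs with hj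
    · exact touchLen_leftmostPath hjmp hord y (by omega)
    · rfl
  rw [unionLen_eq_sub, Finset.sum_congr rfl fun j _ => hpath j,
    Finset.sum_congr rfl fun j _ => htouch j, Fin.sum_univ_eq_sum_range (fun j => F (j + 1) - L j),
    Fin.sum_univ_eq_sum_range (fun j => if j + 1 < k then F (j + 1) - L (j + 1) else 0),
    sum_range_ite_succ_lt (fun m => F m - L m) (by simp [F, L]), ← sum_sub_distrib]
  calc ∑ j ∈ range k, (F (j + 1) - L j - (F j - L j))
      = ∑ j ∈ range k, (F (j + 1) - F j) := Finset.sum_congr rfl fun j _ => by ring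
    _ = F k := by rw [Finset.sum_range_sub (F ·) k]; simp [F]

lemma IsTuple.unionLen_le (hjmp : ∀ i, 1 ≤ i → i ≤ n → NonnegJumps (f i))
    (hord : PitmanOrdered f n) (hkn : k ≤ n) {t : Fin k → ℕ → ℝ} (ht : IsTuple n k y t) :
    unionLen f n k t ≤ unionLen f n k (fun j => leftmostPath y j) := by
  rw [unionLen_eq_sub, unionLen_eq_sub]
  gcongr with j _ j _
  · exact pathLen_le_pathLen_leftmostPath hjmp hord (by omega) (fun r => ht.nonneg j)
      (fun r hr => ht.eq_of_le (by omega) hr) (ht.1 j)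
  · split_ifs with hj
    · exact touchLen_leftmostPath_le hjmp hord (fun r => ht.nonneg j)
        (fun r hr => ht.eq_of_le (by omega) hr) (fun r hr => ht.eq_of_le (by omega) hr)
    · rfl

end Tuples

theorem stmt17_general (n k : ℕ) (hkn : k ≤ n)
    (f : ℕ → ℝ → ℝ)
    (hjmp : ∀ i : ℕ, 1 ≤ i → i ≤ n → NonnegJumps (f i))
    (hord : ∀ i : ℕ, 2 ≤ i → i ≤ n → ∀ z : ℝ, 0 ≤ z → f i z ≤ lml (f (i - 1)) z)
    (y : ℝ) (hy : 0 ≤ y) :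
    IsGreatest {v : ℝ | ∃ t : Fin k → ℕ → ℝ, IsTuple n k y t ∧ v = unionLen f n k t}
      (∑ i ∈ Finset.Icc 1 k, f i y) ∧
    IsTuple n k y (fun j i => if j.val + 1 ≤ i then 0 else y) ∧
    unionLen f n k (fun j i => if j.val + 1 ≤ i then 0 else y)
      = ∑ i ∈ Finset.Icc 1 k, f i y := by
  have hleft : IsTuple n k y (fun j => leftmostPath y j) := isTuple_leftmostPath hkn hy
  have hvalue := unionLen_leftmostPath hjmp hord hkn y
  refine ⟨⟨⟨_, hleft, hvalue.symm⟩, ?_⟩, hleft, hvalue⟩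
  rintro v ⟨t, ht, rfl⟩
  exact hvalue ▸ ht.unionLen_le hjmp hord hkn

theorem stmt17 (n k : ℕ) (hk1 : 1 ≤ k) (hkn : k ≤ n)
    (f : ℕ → ℝ → ℝ)
    (hcad : ∀ i : ℕ, 1 ≤ i → i ≤ n → Cadlag (f i))
    (hjmp : ∀ i : ℕ, 1 ≤ i → i ≤ n → NonnegJumps (f i))
    (hord : ∀ i : ℕ, 2 ≤ i → i ≤ n → ∀ z : ℝ, 0 ≤ z → f i z ≤ lml (f (i - 1)) z)
    (y : ℝ) (hy : 0 ≤ y) :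
    IsGreatest {v : ℝ | ∃ t : Fin k → ℕ → ℝ, IsTuple n k y t ∧ v = unionLen f n k t}
      (∑ i ∈ Finset.Icc 1 k, f i y) ∧
    IsTuple n k y (fun j i => if j.val + 1 ≤ i then 0 else y) ∧
    unionLen f n k (fun j i => if j.val + 1 ≤ i then 0 else y)
      = ∑ i ∈ Finset.Icc 1 k, f i y :=
  stmt17_general n k hkn f hjmp hord y hy
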